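/- arXiv:1003.0730 — 3 statements merged into one kernel-verified Lean document; each statement's English description precedes it below -/
import Mathlib

section
/- Let g : ℝ → ℝ be smooth and positive, n ≥ 2 an integer, and G an antiderivative of g^{−1/n}. Then on the region p > 0, the function Q(p,q) = g(q)^{(1−n)/n}·G(q)/(n·p^{n−1}) satisfies {H, Q} = 1 where H(p,q) = pⁿ·g(q) and {F,G} = (∂F/∂p)(∂G/∂q) − (∂F/∂q)(∂G/∂p). -/
open Real

/-- For H = pⁿ g(q) and Q = g(q)^{(1−n)/n} G(q) / (n p^{n−1}) with G' = g^{−1/n},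
the Poisson bracket {H,Q} equals 1 on p > 0. -/
theorem stmt_9 (n : ℕ) (hn : 2 ≤ n) (g G : ℝ → ℝ)
    (hg : ContDiff ℝ (⊤ : ℕ∞) g) (hgpos : ∀ x, 0 < g x)
    (hG : ∀ x, HasDerivAt G (g x ^ (-(1 : ℝ) / n)) x)
    (H Q : ℝ → ℝ → ℝ)
    (hH : H = fun p q => p ^ n * g q)
    (hQ : Q = fun p q => g q ^ (((1 : ℝ) - n) / n) * G q / ((n : ℝ) * p ^ (n - 1))) :
    ∀ p q : ℝ, 0 < p →
      (deriv (fun x => H x q) p) * (deriv (fun y => Q p y) q)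
        - (deriv (fun y => H p y) q) * (deriv (fun x => Q x q) p) = 1 := by
  obtain ⟨k, rfl⟩ : ∃ k, n = k + 2 := ⟨n - 2, by omega⟩
  subst hH hQ
  intro p q hp
  have hgq := hgpos q
  have hgd : DifferentiableAt ℝ g q := (hg.differentiable (by simp)).differentiableAt
  set gq := g q with hgq'
  set D := deriv g q with hD
  set e : ℝ := ((1:ℝ) - ((k:ℝ)+2)) / ((k:ℝ)+2) with he
  have hk2 : ((k:ℝ)+2) ≠ 0 := by positivity
  have hpk : ((k:ℝ)+2) * p ^ (k+1) ≠ 0 := by positivity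
  have hsub : (k + 2) - 1 = k + 1 := rfl
  -- derivative of H in p
  have d1 : deriv (fun x => x ^ (k+2) * g q) p = ((k:ℝ)+2) * p^(k+1) * gq := by
    have := ((hasDerivAt_pow (k+2) p).mul_const (g q)).deriv
    simpa [hgq'] using this
  -- derivative of H in q
  have d2 : deriv (fun y => p ^ (k+2) * g y) q = p^(k+2) * D := by
    rw [deriv_const_mul _ hgd]
  -- derivative of Q in p
  have d3 : deriv (fun x => g q ^ e * G q / (((k:ℝ)+2) * x ^ (k+1))) p
      = gq ^ e * G q * (-( ((k:ℝ)+2) * (((k:ℝ)+1) * p ^ k)) / ((((k:ℝ)+2) * p ^ (k+1))^2)) := by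
    have h1 : HasDerivAt (fun x : ℝ => ((k:ℝ)+2) * x ^ (k+1))
        (((k:ℝ)+2) * (((k:ℝ)+1) * p ^ k)) p := by
      have := (hasDerivAt_pow (k+1) p).const_mul ((k:ℝ)+2)
      simpa using this
    have h2 := (h1.inv hpk).const_mul (gq ^ e * G q)
    have h3 : (fun x : ℝ => g q ^ e * G q / (((k:ℝ)+2) * x ^ (k+1)))
        = fun x : ℝ => gq ^ e * G q * (((k:ℝ)+2) * x ^ (k+1))⁻¹ := by
      funext x; rw [div_eq_mul_inv]
    rw [h3]
    exact h2.deriv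
  -- derivative of Q in q
  have hgd' : HasDerivAt g D q := hgd.hasDerivAt
  have h4 : HasDerivAt (fun y => g y ^ e) (D * e * gq ^ (e - 1)) q :=
    hgd'.rpow_const (Or.inl hgq.ne')
  have h5 : HasDerivAt (fun y => g y ^ e * G y)
      (D * e * gq ^ (e-1) * G q + gq ^ e * (gq ^ (-(1:ℝ)/((k:ℝ)+2)))) q := by
    have := h4.mul (hG q)
    push_cast at this
    exact this
  have d4 : deriv (fun y => g y ^ e * G y / (((k:ℝ)+2) * p ^ (k+1))) q
      = (D * e * gq ^ (e-1) * G q + gq ^ e * (gq ^ (-(1:ℝ)/((k:ℝ)+2)))) / (((k:ℝ)+2) * p ^ (k+1)) := by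
    exact (h5.div_const _).deriv
  -- rewrite rpow expressions
  have r1 : gq ^ (e - 1) = gq ^ e / gq := by
    rw [rpow_sub hgq, rpow_one]
  have r2 : gq ^ e * gq ^ (-(1:ℝ)/((k:ℝ)+2)) = gq⁻¹ := by
    rw [← rpow_add hgq]
    have : e + (-(1:ℝ)/((k:ℝ)+2)) = -1 := by rw [he]; field_simp; ring
    rw [this, rpow_neg_one]
  -- now reduce the goal
  have hcast : ((k + 2 : ℕ) : ℝ) = (k:ℝ) + 2 := by push_cast; ring
  simp only [hsub, hcast]
  rw [d1, d2, d3, d4, r1, r2, he]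
  field_simp
  ring
end

section
/- With q(t), p(t) as in the previous statement (a₁ > |A₁|, Ω, Ω₁ > 0), the quantity H₁(t) := ½((p(t)q(t))² + Ω²(log q(t))²) equals a₁ + A₁cos(Ω₁t+δ₁) for all t. -/
/-! In the variables `P = p q` and `Q = log q` the quantity `H₁` is the harmonic-oscillator energy
`½ (P² + Ω² Q²)`, and `(P, Ω Q) = r (cos θ, sin θ)` with `r² = 2 a₁ + 2 A₁ cos (Ω₁ t + δ₁)`. -/

open Real

lemma add_mul_cos_nonneg {a A : ℝ} (h : |A| ≤ a) (x : ℝ) : 0 ≤ a + A * cos x := by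
  have : |A * cos x| ≤ a := by
    rw [abs_mul]
    exact (mul_le_of_le_one_right (abs_nonneg A) (abs_cos_le_one x)).trans h
  linarith [neg_abs_le (A * cos x)]

lemma sq_sqrt_mul_cos_add_sq_mul_sqrt_mul_sin {E Ω : ℝ} (hE : 0 ≤ E) (hΩ : Ω ≠ 0) (θ : ℝ) :
    (√E * cos θ) ^ 2 + Ω ^ 2 * ((1 / Ω) * √E * sin θ) ^ 2 = E := by
  have hrot : (√E * cos θ) ^ 2 + Ω ^ 2 * ((1 / Ω) * √E * sin θ) ^ 2
      = √E ^ 2 * (sin θ ^ 2 + cos θ ^ 2) := by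
    field_simp
    ring
  rw [hrot, sin_sq_add_cos_sq, mul_one, sq_sqrt hE]

theorem stmt_12_general (Ω Ω₁ a₁ A₁ δ₁ : ℝ) (hΩ : 0 < Ω) (ha : |A₁| < a₁)
    (p q : ℝ → ℝ)
    (hq : q = fun t => Real.exp ((1 / Ω) * Real.sqrt (2 * a₁ + 2 * A₁ * Real.cos (Ω₁ * t + δ₁))
      * Real.sin ((Ω * A₁ / Ω₁) * Real.sin (Ω₁ * t + δ₁))))
    (hp : p = fun t => Real.sqrt (2 * a₁ + 2 * A₁ * Real.cos (Ω₁ * t + δ₁))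
      * Real.cos ((Ω * A₁ / Ω₁) * Real.sin (Ω₁ * t + δ₁)) / q t) :
    ∀ t : ℝ, (1 / 2) * ((p t * q t) ^ 2 + Ω ^ 2 * (Real.log (q t)) ^ 2)
      = a₁ + A₁ * Real.cos (Ω₁ * t + δ₁) := by
  intro t
  set E := 2 * a₁ + 2 * A₁ * cos (Ω₁ * t + δ₁)
  set θ := (Ω * A₁ / Ω₁) * sin (Ω₁ * t + δ₁)
  have hE : 0 ≤ E := by
    have := add_mul_cos_nonneg ha.le (Ω₁ * t + δ₁)
    linarith
  have hlog : log (q t) = (1 / Ω) * √E * sin θ := by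
    rw [hq, log_exp]
  have hpq : p t * q t = √E * cos θ := by
    rw [hp]
    exact div_mul_cancel₀ _ (by rw [hq]; exact (exp_pos _).ne')
  rw [hpq, hlog, sq_sqrt_mul_cos_add_sq_mul_sqrt_mul_sin hE hΩ.ne']
  ring

theorem stmt_12 (Ω Ω₁ a₁ A₁ δ₁ : ℝ) (hΩ : 0 < Ω) (hΩ₁ : 0 < Ω₁) (ha : |A₁| < a₁)
    (p q : ℝ → ℝ)
    (hq : q = fun t => Real.exp ((1 / Ω) * Real.sqrt (2 * a₁ + 2 * A₁ * Real.cos (Ω₁ * t + δ₁))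
      * Real.sin ((Ω * A₁ / Ω₁) * Real.sin (Ω₁ * t + δ₁))))
    (hp : p = fun t => Real.sqrt (2 * a₁ + 2 * A₁ * Real.cos (Ω₁ * t + δ₁))
      * Real.cos ((Ω * A₁ / Ω₁) * Real.sin (Ω₁ * t + δ₁)) / q t) :
    ∀ t : ℝ, (1 / 2) * ((p t * q t) ^ 2 + Ω ^ 2 * (Real.log (q t)) ^ 2)
      = a₁ + A₁ * Real.cos (Ω₁ * t + δ₁) :=
  stmt_12_general Ω Ω₁ a₁ A₁ δ₁ hΩ ha p q hq hp
end

section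
/- For Ω ≠ 0 and on the region p > 0, q > 1 (so log q > 0 and pq > 0), the map (p,q) ↦ (H₁, Q₁) with H₁ = ½((pq)² + Ω²(log q)²) and Q₁ = (1/Ω)arctan(Ω log q/(pq)) has Jacobian determinant (∂H₁/∂p)(∂Q₁/∂q) − (∂H₁/∂q)(∂Q₁/∂p) equal to 1 at every point of the region. -/
open Real

/-- On p > 0, q > 1, the map (p,q) ↦ (H₁,Q₁) with H₁ = ½((pq)² + Ω²(log q)²),
Q₁ = (1/Ω) arctan(Ω log q/(pq)) has Jacobian determinant 1. -/
theorem stmt_17 (Ω : ℝ) (hΩ : Ω ≠ 0)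
    (H₁ Q₁ : ℝ → ℝ → ℝ)
    (hH₁ : H₁ = fun p q => (1 / 2) * ((p * q) ^ 2 + Ω ^ 2 * (Real.log q) ^ 2))
    (hQ₁ : Q₁ = fun p q => (1 / Ω) * Real.arctan (Ω * Real.log q / (p * q))) :
    ∀ p q : ℝ, 0 < p → 1 < q →
      (deriv (fun x => H₁ x q) p) * (deriv (fun y => Q₁ p y) q)
        - (deriv (fun y => H₁ p y) q) * (deriv (fun x => Q₁ x q) p) = 1 := by
  subst hH₁ hQ₁
  intro p q hp hq
  have hq0 : (0:ℝ) < q := lt_trans one_pos hq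
  have hp0 : p ≠ 0 := ne_of_gt hp
  have hq0' : q ≠ 0 := ne_of_gt hq0
  have hpq : p * q ≠ 0 := mul_ne_zero hp0 hq0'
  have hlog : 0 < Real.log q := Real.log_pos hq
  -- ∂H₁/∂p
  have hA : HasDerivAt (fun x : ℝ => (1/2) * ((x * q) ^ 2 + Ω ^ 2 * (Real.log q) ^ 2))
      (p * q ^ 2) p := by
    have h := ((((hasDerivAt_id p).mul_const q).pow 2).add_const
      (Ω ^ 2 * (Real.log q) ^ 2)).const_mul (1/2)
    refine h.congr_deriv ?_
    push_cast
    simp [id]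
    ring
  -- ∂H₁/∂q
  have hB : HasDerivAt (fun y : ℝ => (1/2) * ((p * y) ^ 2 + Ω ^ 2 * (Real.log y) ^ 2))
      (p ^ 2 * q + Ω ^ 2 * Real.log q / q) q := by
    have h1 : HasDerivAt (fun y : ℝ => (p * y) ^ 2) (2 * (p * q) * p) q := by
      have := (((hasDerivAt_id q).const_mul p).pow 2)
      refine this.congr_deriv ?_
      push_cast
      simp [id]
    have h2 : HasDerivAt (fun y : ℝ => Ω ^ 2 * (Real.log y) ^ 2)
        (Ω ^ 2 * (2 * Real.log q * (1 / q))) q := by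
      have := (((Real.hasDerivAt_log hq0').pow 2).const_mul (Ω ^ 2))
      refine this.congr_deriv ?_
      push_cast
      ring
    have h := (h1.add h2).const_mul (1/2)
    refine h.congr_deriv ?_
    field_simp
  -- inner function derivative for Q₁ in p
  have hCinner : HasDerivAt (fun x : ℝ => Ω * Real.log q / (x * q))
      (-(Ω * Real.log q * q / (p * q) ^ 2)) p := by
    have h := (((hasDerivAt_id p).mul_const q).inv hpq).const_mul (Ω * Real.log q)
    simp only [id] at h
    have hfun : (fun x : ℝ => Ω * Real.log q / (x * q))
        = fun x : ℝ => Ω * Real.log q * (x * q)⁻¹ := by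
      ext x; rw [div_eq_mul_inv]
    rw [hfun]
    refine h.congr_deriv ?_
    field_simp
  have hC := (hCinner.arctan).const_mul (1/Ω)
  -- inner function derivative for Q₁ in q
  have hDinner : HasDerivAt (fun y : ℝ => Ω * Real.log y / (p * y))
      (((Ω * (1 / q)) * (p * q) - (Ω * Real.log q) * p) / (p * q) ^ 2) q := by
    have h1 : HasDerivAt (fun y : ℝ => Ω * Real.log y) (Ω * (1 / q)) q := by
      have := (Real.hasDerivAt_log hq0').const_mul Ω
      refine this.congr_deriv ?_
      ring
    have h2 : HasDerivAt (fun y : ℝ => p * y) p q := by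
      have := (hasDerivAt_id q).const_mul p
      simpa using this
    exact h1.div h2 hpq
  have hD := (hDinner.arctan).const_mul (1/Ω)
  rw [hA.deriv, hB.deriv, hC.deriv, hD.deriv]
  have hden : 1 + (Ω * Real.log q / (p * q)) ^ 2 ≠ 0 := by positivity
  field_simp
  ring
end
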